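/- arXiv:1410.6204 — 3 statements merged into one kernel-verified Lean document; each statement's English description precedes it below -/
import Mathlib

section
/- Let L_n denote the linear tree (path graph) on the vertex set V = {1,…,n}. Then for every finite simple connected graph G on V, every function f : V → ℝ with f ≥ 0, and every vertex j ∈ V, one has M_{[G]} f(j) ≤ M_{[L_n]} f(j). -/
open scoped Classical
open Finset

noncomputable section

variable {V : Type*} [Fintype V]

/-- metric ball of radius `r` centered at `v` in the graph `G` -/
def gBall (G : SimpleGraph V) (v : V) (r : ℕ) : Finset V :=
  Finset.univ.filter fun w => G.dist v w ≤ r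

/-- Hardy–Littlewood maximal operator on the graph `G` -/
def maxOp (G : SimpleGraph V) (f : V → ℝ) (v : V) : ℝ :=
  ⨆ k : Fin (Fintype.card V), (∑ w ∈ gBall G v k.1, |f w|) / ((gBall G v k.1).card : ℝ)

/-- ℓ^p (quasi)norm of a function on the vertices -/
def pNorm (p : ℝ) (f : V → ℝ) : ℝ := (∑ v, |f v| ^ p) ^ (1 / p)

/-- operator (quasi)norm of the maximal operator of `G` on ℓ^p -/
def opNorm (G : SimpleGraph V) (p : ℝ) : ℝ :=
  ⨆ f : {f : V → ℝ // f ≠ 0}, pNorm p (maxOp G f.1) / pNorm p f.1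

/-- weak ℓ^p norm -/
def wNorm (p : ℝ) (f : V → ℝ) : ℝ :=
  ⨆ t : {t : ℝ // 0 < t},
    t.1 * ((Finset.univ.filter fun v => t.1 < |f v|).card : ℝ) ^ (1 / p)

/-- weak-type operator norm of the maximal operator of `G` -/
def wOpNorm (G : SimpleGraph V) (p : ℝ) : ℝ :=
  ⨆ f : {f : V → ℝ // f ≠ 0}, wNorm p (maxOp G f.1) / pNorm p f.1

/-- maximal operator over all graphs on `V` isomorphic to `G` -/
def maxOpIso (G : SimpleGraph V) (f : V → ℝ) (j : V) : ℝ :=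
  ⨆ H : {H : SimpleGraph V // Nonempty (H ≃g G)}, maxOp H.1 f j

/-- operator norm of `maxOpIso` on ℓ^p -/
def opNormIso (G : SimpleGraph V) (p : ℝ) : ℝ :=
  ⨆ f : {f : V → ℝ // f ≠ 0}, pNorm p (maxOpIso G f.1) / pNorm p f.1

/-- Kronecker delta at `k` -/
def kdelta (k : V) : V → ℝ := fun j => if j = k then 1 else 0

/-- star graph on `Fin n` with center `0` -/
def starGraph (n : ℕ) : SimpleGraph (Fin n) :=
  SimpleGraph.fromRel fun i _ => i.1 = 0

/-- diameter of a graph -/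
def gDiam (G : SimpleGraph V) : ℕ :=
  Finset.univ.sup fun p : V × V => G.dist p.1 p.2

/-- dilation index of a graph -/
def dilIndex (G : SimpleGraph V) : ℝ :=
  ⨆ x : V, ⨆ r : {r : ℕ // r ≤ gDiam G},
    ((gBall G x (3 * r.1)).card : ℝ) / ((gBall G x r.1).card : ℝ)

/-- overlapping index of a graph -/
def overlapIndex (G : SimpleGraph V) : ℕ :=
  sInf { r : ℕ | ∀ J : Finset (V × ℕ), ∃ I ⊆ J,
    J.biUnion (fun j => gBall G j.1 j.2) = I.biUnion (fun i => gBall G i.1 i.2) ∧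
    ∀ v : V, (I.filter fun i => v ∈ gBall G i.1 i.2).card ≤ r }

/-! Every ball `B_H(j, k)` contains `j`, and every set `S ∋ j` is a ball around `j` in some copy
of `L_n`: number the vertices of `L_n` so that `j` is the endpoint `0` and the first `|S|` vertices
are those of `S`; then `S = B(j, |S| - 1)`. So each average in `M_{[G]} f(j)` occurs in
`M_{[L_n]} f(j)`. -/

namespace SimpleGraph

variable {α β : Type*} {G : SimpleGraph α} {G' : SimpleGraph β}

theorem Hom.edist_le (f : G →g G') (u v : α) : G'.edist (f u) (f v) ≤ G.edist u v := by
  by_cases h : G.Reachable u v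
  · obtain ⟨p, hp⟩ := h.exists_walk_length_eq_edist
    exact hp ▸ (SimpleGraph.edist_le (p.map f)).trans_eq (by rw [Walk.length_map])
  · exact edist_eq_top_of_not_reachable h ▸ le_top

theorem Iso.edist_eq (e : G ≃g G') (u v : α) : G'.edist (e u) (e v) = G.edist u v :=
  le_antisymm (e.toHom.edist_le u v) (by simpa using e.symm.toHom.edist_le (e u) (e v))

theorem Iso.dist_eq (e : G ≃g G') (u v : α) : G'.dist (e u) (e v) = G.dist u v :=
  congrArg ENat.toNat (e.edist_eq u v)

theorem Walk.val_le_val_add_length {n : ℕ} {a b : Fin n} (p : (pathGraph n).Walk a b) :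
    b.val ≤ a.val + p.length := by
  induction p with
  | nil => simp
  | cons hadj _ ih =>
    rw [pathGraph_adj] at hadj
    rw [Walk.length_cons]
    omega

theorem pathGraph_dist_zero {n : ℕ} [NeZero n] (i : Fin n) : (pathGraph n).dist 0 i = i := by
  obtain ⟨n, rfl⟩ := Nat.exists_eq_add_one_of_ne_zero (NeZero.ne n)
  apply le_antisymm
  · induction i using Fin.induction with
    | zero => simp
    | succ i ih =>
      have hadj : (pathGraph (n + 1)).Adj i.castSucc i.succ := by simp [pathGraph_adj]
      calc (pathGraph (n + 1)).dist 0 i.succ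
          ≤ (pathGraph (n + 1)).dist 0 i.castSucc + 1 := by
            simpa [dist_eq_one_iff_adj.mpr hadj] using
              (pathGraph_preconnected _ 0 i.castSucc).dist_triangle_left i.succ
        _ ≤ i.succ := by simpa using ih
  · obtain ⟨p, hp⟩ := (pathGraph_preconnected (n + 1) 0 i).exists_walk_length_eq_dist
    simpa [hp] using p.val_le_val_add_length

end SimpleGraph

theorem Equiv.Perm.exists_apply_eq_and_mem_iff {α : Type*} {s t : Finset α} (h : #s = #t)
    {a b : α} (ha : a ∈ s) (hb : b ∈ t) :
    ∃ σ : Perm α, σ a = b ∧ ∀ x, σ x ∈ t ↔ x ∈ s := by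
  let e : {x // x ∈ s} ≃ {x // x ∈ t} :=
    (s.equivOfCardEq h).trans (swap (s.equivOfCardEq h ⟨a, ha⟩) ⟨b, hb⟩)
  refine ⟨e.extendSubtype, by simp [e, extendSubtype_apply_of_mem _ _ ha], fun x => ?_⟩
  by_cases hx : x ∈ s
  · exact iff_of_true (e.extendSubtype_mem x hx) hx
  · exact iff_of_false (e.extendSubtype_not_mem x hx) hx

open SimpleGraph

theorem mem_gBall_self (G : SimpleGraph V) (v : V) (r : ℕ) : v ∈ gBall G v r := by
  simp [gBall]

theorem exists_iso_pathGraph_gBall_eq {n : ℕ} (S : Finset (Fin n)) {j : Fin n} (hj : j ∈ S) :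
    ∃ H : SimpleGraph (Fin n), Nonempty (H ≃g pathGraph n) ∧ gBall H j (#S - 1) = S := by
  have : NeZero n := ⟨j.pos.ne'⟩
  have hS : 0 < #S := card_pos.mpr ⟨j, hj⟩
  have hT : #{i : Fin n | i < #S} = #S := by
    rw [Fin.card_filter_val_lt]
    exact min_eq_right (by simpa using S.card_le_univ)
  obtain ⟨σ, hσj, hσ⟩ :=
    Equiv.Perm.exists_apply_eq_and_mem_iff hT.symm hj (by simp [hS] : (0 : Fin n) ∈ _)
  refine ⟨(pathGraph n).comap σ, ⟨Iso.comap σ _⟩, Finset.ext fun w => ?_⟩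
  have hdist : ((pathGraph n).comap σ).dist j w = σ w := by
    rw [← (Iso.comap σ (pathGraph n)).dist_eq, Iso.comap_apply, Iso.comap_apply, hσj,
      pathGraph_dist_zero]
  simpa [gBall, hdist, Nat.le_sub_one_iff_lt hS] using hσ w

theorem average_le_maxOp (G : SimpleGraph V) (f : V → ℝ) (v : V) {k : ℕ}
    (hk : k < Fintype.card V) :
    (∑ w ∈ gBall G v k, |f w|) / #(gBall G v k) ≤ maxOp G f v :=
  le_ciSup (f := fun k : Fin (Fintype.card V) => (∑ w ∈ gBall G v k, |f w|) / #(gBall G v k))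
    (Finite.bddAbove_range _) ⟨k, hk⟩

theorem maxOp_le_maxOpIso {G H : SimpleGraph V} (e : H ≃g G) (f : V → ℝ) (v : V) :
    maxOp H f v ≤ maxOpIso G f v :=
  le_ciSup (f := fun H : Subtype _ => maxOp H.1 f v) (Finite.bddAbove_range _) ⟨H, ⟨e⟩⟩

theorem average_le_maxOpIso_pathGraph {n : ℕ} (f : Fin n → ℝ) {j : Fin n} (S : Finset (Fin n))
    (hj : j ∈ S) : (∑ w ∈ S, |f w|) / #S ≤ maxOpIso (pathGraph n) f j := by
  obtain ⟨H, ⟨e⟩, hball⟩ := exists_iso_pathGraph_gBall_eq S hj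
  have hk : #S - 1 < Fintype.card (Fin n) :=
    Nat.sub_one_lt_of_le (card_pos.mpr ⟨j, hj⟩) S.card_le_univ
  calc (∑ w ∈ S, |f w|) / #S
      = (∑ w ∈ gBall H j (#S - 1), |f w|) / #(gBall H j (#S - 1)) := by rw [hball]
    _ ≤ maxOp H f j := average_le_maxOp H f j hk
    _ ≤ maxOpIso (pathGraph n) f j := maxOp_le_maxOpIso e f j

theorem stmt2_general (n : ℕ) (G : SimpleGraph (Fin n))
    (f : Fin n → ℝ) (j : Fin n) :
    maxOpIso G f j ≤ maxOpIso (SimpleGraph.pathGraph n) f j := by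
  have : Nonempty {H : SimpleGraph (Fin n) // Nonempty (H ≃g G)} := ⟨⟨G, ⟨Iso.refl⟩⟩⟩
  have : Nonempty (Fin (Fintype.card (Fin n))) := ⟨⟨0, by simpa using j.pos⟩⟩
  refine ciSup_le fun H => ciSup_le fun k => ?_
  exact average_le_maxOpIso_pathGraph f _ (mem_gBall_self H.1 j k)

/-- the isomorphism-maximal operator of any graph is dominated by
that of the linear tree. -/
theorem stmt2 (n : ℕ) (G : SimpleGraph (Fin n)) (hG : G.Connected)
    (f : Fin n → ℝ) (hf : ∀ v, 0 ≤ f v) (j : Fin n) :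
    maxOpIso G f j ≤ maxOpIso (SimpleGraph.pathGraph n) f j :=
  stmt2_general n G f j
end
end

section
/- Let V be a finite set with n elements, let 0 < p ≤ 1, and let T be a sublinear operator mapping functions f : V → ℝ to functions Tf : V → ℝ, i.e. |T(f+g)(j)| ≤ |Tf(j)| + |Tg(j)| and |T(c·f)(j)| = |c|·|Tf(j)| for all f, g, all scalars c ∈ ℝ, and all j ∈ V. Then the operator norm of T on ℓ^p satisfies sup{‖Tf‖_p/‖f‖_p : f ≢ 0} = max_{k∈V} ‖T δ_k‖_p. -/
/-!
Write `f = ∑ₖ f(k) δₖ`. Sublinearity gives the pointwise bound `|Tf(j)| ≤ ∑ₖ |f(k)| |Tδₖ(j)|`,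
and since `t ↦ t ^ p` is subadditive on `[0, ∞)` for `p ≤ 1`, raising it to the power `p` and
summing over `j` yields `‖Tf‖_p^p ≤ ∑ₖ |f(k)|^p ‖Tδₖ‖_p^p ≤ (maxₖ ‖Tδₖ‖_p)^p ‖f‖_p^p`.
The reverse inequality is witnessed by the deltas themselves, as `‖δₖ‖_p = 1`.
-/

open scoped Classical
open Finset

noncomputable section

variable {V : Type*} [Fintype V]

theorem rpow_sum_le_sum_rpow_of_le_one {ι : Type*} (s : Finset ι) {g : ι → ℝ}
    (hg : ∀ i ∈ s, 0 ≤ g i) {p : ℝ} (hp0 : 0 < p) (hp1 : p ≤ 1) :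
    (∑ i ∈ s, g i) ^ p ≤ ∑ i ∈ s, g i ^ p :=
  le_sum_of_subadditive_on_pred (fun x : ℝ => x ^ p) (0 ≤ ·)
    (Real.zero_rpow hp0.ne').le (fun _ _ hx hy => Real.rpow_add_le_add_rpow hx hy hp0.le hp1)
    (fun _ _ => add_nonneg) g hg

section PNorm

variable {p : ℝ}

theorem pNorm_nonneg (f : V → ℝ) : 0 ≤ pNorm p f :=
  Real.rpow_nonneg (sum_nonneg fun _ _ => Real.rpow_nonneg (abs_nonneg _) p) _

theorem pNorm_rpow (hp : p ≠ 0) (f : V → ℝ) : pNorm p f ^ p = ∑ v, |f v| ^ p := by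
  rw [pNorm, ← Real.rpow_mul (sum_nonneg fun _ _ => Real.rpow_nonneg (abs_nonneg _) p),
    one_div_mul_cancel hp, Real.rpow_one]

theorem pNorm_pos {f : V → ℝ} (hf : f ≠ 0) : 0 < pNorm p f := by
  obtain ⟨v, hv⟩ := Function.ne_iff.1 hf
  exact Real.rpow_pos_of_pos (sum_pos' (fun _ _ => Real.rpow_nonneg (abs_nonneg _) p)
    ⟨v, mem_univ v, Real.rpow_pos_of_pos (abs_pos.2 hv) p⟩) _

omit [Fintype V] in
theorem kdelta_ne_zero (k : V) : kdelta k ≠ 0 :=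
  Function.ne_iff.2 ⟨k, by simp [kdelta]⟩

theorem pNorm_kdelta (hp : 0 < p) (k : V) : pNorm p (kdelta k) = 1 := by
  rw [pNorm, sum_eq_single k (fun j _ hj => by simp [kdelta, hj, Real.zero_rpow hp.ne'])
    (by simp)]
  simp [kdelta]

theorem sum_smul_kdelta (f : V → ℝ) : ∑ k, f k • kdelta k = f := by
  ext j
  simp [kdelta]

end PNorm

section Sublinear

variable {T : (V → ℝ) → (V → ℝ)}
  (hsub : ∀ (f g : V → ℝ) (j : V), |T (f + g) j| ≤ |T f j| + |T g j|)
  (hhom : ∀ (c : ℝ) (f : V → ℝ) (j : V), |T (c • f) j| = |c| * |T f j|)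
include hsub hhom

theorem abs_apply_le_sum_abs_mul_kdelta (f : V → ℝ) (j : V) :
    |T f j| ≤ ∑ k, |f k| * |T (kdelta k) j| := by
  have hzero : |T 0 j| ≤ 0 := by simpa using (hhom 0 0 j).le
  calc |T f j| = |T (∑ k, f k • kdelta k) j| := by rw [sum_smul_kdelta]
    _ ≤ ∑ k, |T (f k • kdelta k) j| :=
      le_sum_of_subadditive (fun g => |T g j|) hzero (fun g h => hsub g h j) _ _
    _ = ∑ k, |f k| * |T (kdelta k) j| := by simp only [hhom]

theorem sum_abs_apply_rpow_le {p : ℝ} (hp0 : 0 < p) (hp1 : p ≤ 1) (f : V → ℝ) :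
    ∑ j, |T f j| ^ p ≤ ∑ k, |f k| ^ p * pNorm p (T (kdelta k)) ^ p := by
  have hpoint (j : V) : |T f j| ^ p ≤ ∑ k, |f k| ^ p * |T (kdelta k) j| ^ p :=
    calc |T f j| ^ p ≤ (∑ k, |f k| * |T (kdelta k) j|) ^ p :=
          Real.rpow_le_rpow (abs_nonneg _)
            (abs_apply_le_sum_abs_mul_kdelta hsub hhom f j) hp0.le
      _ ≤ ∑ k, (|f k| * |T (kdelta k) j|) ^ p :=
          rpow_sum_le_sum_rpow_of_le_one _ (fun _ _ => by positivity) hp0 hp1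
      _ = ∑ k, |f k| ^ p * |T (kdelta k) j| ^ p := by
          simp only [Real.mul_rpow (abs_nonneg _) (abs_nonneg _)]
  calc ∑ j, |T f j| ^ p ≤ ∑ j, ∑ k, |f k| ^ p * |T (kdelta k) j| ^ p :=
        sum_le_sum fun j _ => hpoint j
    _ = ∑ k, |f k| ^ p * pNorm p (T (kdelta k)) ^ p := by
      rw [sum_comm]
      simp only [pNorm_rpow hp0.ne', mul_sum]

theorem pNorm_apply_le_mul_pNorm {p : ℝ} (hp0 : 0 < p) (hp1 : p ≤ 1) {M : ℝ} (hM0 : 0 ≤ M)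
    (hM : ∀ k, pNorm p (T (kdelta k)) ≤ M) (f : V → ℝ) :
    pNorm p (T f) ≤ M * pNorm p f := by
  rw [← Real.rpow_le_rpow_iff (pNorm_nonneg _) (mul_nonneg hM0 (pNorm_nonneg _)) hp0,
    Real.mul_rpow hM0 (pNorm_nonneg _), pNorm_rpow hp0.ne', pNorm_rpow hp0.ne', mul_sum]
  refine (sum_abs_apply_rpow_le hsub hhom hp0 hp1 f).trans (sum_le_sum fun k _ => ?_)
  rw [mul_comm (M ^ p)]
  exact mul_le_mul_of_nonneg_left (Real.rpow_le_rpow (pNorm_nonneg _) (hM k) hp0.le)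
    (by positivity)

end Sublinear

theorem stmt4_general {V : Type*} [Fintype V] (p : ℝ) (hp0 : 0 < p) (hp1 : p ≤ 1)
    (T : (V → ℝ) → (V → ℝ))
    (hsub : ∀ (f g : V → ℝ) (j : V), |T (f + g) j| ≤ |T f j| + |T g j|)
    (hhom : ∀ (c : ℝ) (f : V → ℝ) (j : V), |T (c • f) j| = |c| * |T f j|) :
    (⨆ f : {f : V → ℝ // f ≠ 0}, pNorm p (T f.1) / pNorm p f.1)
      = ⨆ k : V, pNorm p (T (kdelta k)) := by
  set M := ⨆ k : V, pNorm p (T (kdelta k))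
  have hM (k : V) : pNorm p (T (kdelta k)) ≤ M :=
    le_ciSup (Finite.bddAbove_range fun k => pNorm p (T (kdelta k))) k
  have hM0 : 0 ≤ M := Real.iSup_nonneg fun k => pNorm_nonneg _
  have hratio (f : {f : V → ℝ // f ≠ 0}) : pNorm p (T f.1) / pNorm p f.1 ≤ M :=
    (div_le_iff₀ (pNorm_pos f.2)).2 (pNorm_apply_le_mul_pNorm hsub hhom hp0 hp1 hM0 hM f.1)
  refine le_antisymm (Real.iSup_le hratio hM0) (Real.iSup_le (fun k => ?_)
    (Real.iSup_nonneg fun f => div_nonneg (pNorm_nonneg _) (pNorm_nonneg _)))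
  calc pNorm p (T (kdelta k))
      = pNorm p (T (kdelta k)) / pNorm p (kdelta k) := by rw [pNorm_kdelta hp0, div_one]
    _ ≤ _ := le_ciSup ⟨M, Set.forall_mem_range.2 hratio⟩ ⟨kdelta k, kdelta_ne_zero k⟩

/-- for 0 < p ≤ 1, the ℓ^p norm of a sublinear operator is attained
on Kronecker deltas. -/
theorem stmt4 {V : Type*} [Fintype V] [Nonempty V] (p : ℝ) (hp0 : 0 < p) (hp1 : p ≤ 1)
    (T : (V → ℝ) → (V → ℝ))
    (hsub : ∀ (f g : V → ℝ) (j : V), |T (f + g) j| ≤ |T f j| + |T g j|)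
    (hhom : ∀ (c : ℝ) (f : V → ℝ) (j : V), |T (c • f) j| = |c| * |T f j|) :
    (⨆ f : {f : V → ℝ // f ≠ 0}, pNorm p (T f.1) / pNorm p f.1)
      = ⨆ k : V, pNorm p (T (kdelta k)) :=
  stmt4_general p hp0 hp1 T hsub hhom
end
end

section
/- Let K_n be the complete graph on n ≥ 2 vertices and let 1 < p < ∞. Then the restricted-type norm satisfies ‖M_{K_n}‖_{p,rest}^p = 1 + (1/n^p)·max_{1 ≤ k ≤ n-1} (n-k)·k^{p-1}. Moreover, if n ≤ p' (where 1/p + 1/p' = 1), this maximum is attained at k = 1, so that ‖M_{K_n}‖_{p,rest} = (1 + (n-1)/n^p)^{1/p}, and if n ≤ p it is attained at k = n-1, so that ‖M_{K_n}‖_{p,rest} = (1 + (n-1)^{p-1}/n^p)^{1/p}. -/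
open scoped Classical
open Finset

noncomputable section

variable {V : Type*} [Fintype V]

/-- restricted-type norm of the maximal operator -/
def restNorm {V : Type*} [Fintype V] (G : SimpleGraph V) (p : ℝ) : ℝ :=
  ⨆ A : {A : Finset V // A.Nonempty},
    pNorm p (maxOp G fun v => if v ∈ A.1 then (1 : ℝ) else 0) /
      pNorm p (fun v => if v ∈ A.1 then (1 : ℝ) else 0)

lemma top_dist_le_one {n : ℕ} (v w : Fin n) : (⊤ : SimpleGraph (Fin n)).dist v w ≤ 1 := by
  by_cases h : v = w
  · subst h; simp [SimpleGraph.dist_self]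
  · have hadj : (⊤ : SimpleGraph (Fin n)).Adj v w := by simp [h]
    simpa using SimpleGraph.dist_le hadj.toWalk

lemma gBall_top_zero {n : ℕ} (v : Fin n) : gBall (⊤ : SimpleGraph (Fin n)) v 0 = {v} := by
  ext w
  simp only [gBall, Finset.mem_filter, Finset.mem_univ, true_and, Nat.le_zero,
    Finset.mem_singleton]
  constructor
  · intro h
    rcases SimpleGraph.dist_eq_zero_iff_eq_or_not_reachable.mp h with h1 | h2
    · exact h1.symm
    · by_contra hne
      exact h2 (SimpleGraph.Adj.reachable (by simp [Ne.symm hne, (· ≠ ·)] ))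
  · rintro rfl; simp [SimpleGraph.dist_self]

lemma gBall_top_pos {n : ℕ} (v : Fin n) {r : ℕ} (hr : 1 ≤ r) :
    gBall (⊤ : SimpleGraph (Fin n)) v r = Finset.univ := by
  ext w
  simp only [gBall, Finset.mem_filter, Finset.mem_univ, true_and, iff_true]
  exact le_trans (top_dist_le_one v w) hr

lemma maxOp_top {n : ℕ} (hn : 2 ≤ n) (f : Fin n → ℝ) (v : Fin n) :
    maxOp (⊤ : SimpleGraph (Fin n)) f v = max |f v| ((∑ w, |f w|) / n) := by
  have hcard : Fintype.card (Fin n) = n := Fintype.card_fin n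
  have hterm : ∀ k : Fin (Fintype.card (Fin n)),
      (∑ w ∈ gBall (⊤ : SimpleGraph (Fin n)) v k.1, |f w|) /
        ((gBall (⊤ : SimpleGraph (Fin n)) v k.1).card : ℝ)
      = if k.1 = 0 then |f v| else (∑ w, |f w|) / n := by
    intro k
    by_cases h : k.1 = 0
    · simp [h, gBall_top_zero]
    · have h1 : 1 ≤ k.1 := Nat.one_le_iff_ne_zero.mpr h
      simp [h, gBall_top_pos v h1, hcard]
  have : Nonempty (Fin (Fintype.card (Fin n))) := by rw [hcard]; exact ⟨⟨0, by omega⟩⟩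
  apply le_antisymm
  · apply ciSup_le
    intro k
    rw [hterm k]
    by_cases h : k.1 = 0 <;> simp [h, le_max_left, le_max_right]
  · have hbdd : BddAbove (Set.range fun k : Fin (Fintype.card (Fin n)) =>
        (∑ w ∈ gBall (⊤ : SimpleGraph (Fin n)) v k.1, |f w|) /
          ((gBall (⊤ : SimpleGraph (Fin n)) v k.1).card : ℝ)) :=
      Set.Finite.bddAbove (Set.finite_range _)
    apply max_le
    · have := le_ciSup hbdd (⟨0, by omega⟩ : Fin (Fintype.card (Fin n)))
      rwa [hterm ⟨0, by omega⟩] at this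
    · have := le_ciSup hbdd (⟨1, by omega⟩ : Fin (Fintype.card (Fin n)))
      rwa [hterm ⟨1, by omega⟩] at this

lemma ratio_eq {n : ℕ} (hn : 2 ≤ n) {p : ℝ} (hp : 1 < p) (A : Finset (Fin n)) (hA : A.Nonempty)
    (f : Fin n → ℝ) (hfA : ∀ v, f v = if v ∈ A then (1:ℝ) else 0) :
    pNorm p (maxOp (⊤ : SimpleGraph (Fin n)) f) / pNorm p f
    = (1 + ((n:ℝ) - (A.card:ℝ)) * (A.card:ℝ) ^ (p-1) / (n:ℝ) ^ p) ^ (1/p) := by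
  set k : ℝ := (A.card : ℝ) with hk
  have hcd : A.card ≤ n := by simpa using Finset.card_le_univ A
  have hk1 : 1 ≤ k := by rw [hk]; exact_mod_cast Finset.card_pos.mpr hA
  have hk0 : 0 < k := lt_of_lt_of_le one_pos hk1
  have hn0 : (0:ℝ) < n := by positivity
  have hkn : k ≤ n := by rw [hk]; exact_mod_cast hcd
  have habs : ∀ v, |f v| = f v := by
    intro v; rw [abs_of_nonneg]; rw [hfA v]; by_cases h : v ∈ A <;> simp [h]
  have hsum : ∑ w, |f w| = k := by
    simp only [habs]
    rw [Finset.sum_congr rfl fun v _ => hfA v]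
    rw [Finset.sum_ite_mem, Finset.univ_inter, Finset.sum_const, nsmul_eq_mul, mul_one, hk]
  have hmax : ∀ v, maxOp (⊤ : SimpleGraph (Fin n)) f v = if v ∈ A then 1 else k / n := by
    intro v
    rw [maxOp_top hn f v, hsum, habs]
    rw [hfA v]
    by_cases h : v ∈ A
    · simp only [h, if_true]
      exact max_eq_left ((div_le_one hn0).mpr hkn)
    · simp only [h, if_false]
      exact max_eq_right (by positivity)
  have hp0 : (0:ℝ) < p := lt_trans one_pos hp
  -- numerator
  have hnum : ∑ v, |maxOp (⊤ : SimpleGraph (Fin n)) f v| ^ p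
      = k + ((n:ℝ) - k) * (k / n) ^ p := by
    have : ∀ v, |maxOp (⊤ : SimpleGraph (Fin n)) f v| ^ p
        = if v ∈ A then 1 else (k/n) ^ p := by
      intro v; rw [hmax v]
      by_cases h : v ∈ A
      · simp [h]
      · simp only [h, if_false]
        rw [abs_of_nonneg (by positivity)]
    rw [Finset.sum_congr rfl fun v _ => this v, Finset.sum_ite, Finset.sum_const,
      Finset.sum_const]
    have h1 : Finset.univ.filter (· ∈ A) = A := by ext v; simp
    have h2 : (Finset.univ.filter (¬ · ∈ A)).card = n - A.card := by
      rw [Finset.filter_not, Finset.card_sdiff_of_subset (by simp [h1, Finset.subset_univ])]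
      simp [h1]
    rw [h1, h2]
    simp only [smul_eq_mul, nsmul_eq_mul, mul_one]
    rw [Nat.cast_sub hcd]
    try push_cast
    try rw [hk]
    try ring
  have hden : ∑ v, |f v| ^ p = k := by
    have : ∀ v, |f v| ^ p = if v ∈ A then 1 else 0 := by
      intro v; rw [hfA v]; by_cases h : v ∈ A <;>
        simp [h, Real.zero_rpow (ne_of_gt hp0), Real.one_rpow]
    rw [Finset.sum_congr rfl fun v _ => this v, Finset.sum_ite_mem, Finset.univ_inter,
      Finset.sum_const, nsmul_eq_mul, mul_one]
  have hX : (0:ℝ) ≤ k + ((n:ℝ) - k) * (k / n) ^ p := by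
    have : (0:ℝ) ≤ ((n:ℝ) - k) * (k / n) ^ p := by
      apply mul_nonneg (by linarith) (Real.rpow_nonneg (by positivity) _)
    linarith
  rw [pNorm, pNorm, hnum, hden, ← Real.div_rpow hX (le_of_lt hk0)]
  congr 1
  have hkp : k ^ p = k ^ (p-1) * k := by
    rw [← Real.rpow_add_one (ne_of_gt hk0) (p-1)]; ring_nf
  rw [Real.div_rpow (le_of_lt hk0) (le_of_lt hn0), hkp]
  have hnp : (0:ℝ) < (n:ℝ) ^ p := Real.rpow_pos_of_pos hn0 p
  field_simp

lemma restNorm_top {n : ℕ} (hn : 2 ≤ n) {p : ℝ} (hp : 1 < p) (hne : (Finset.Icc 1 (n-1)).Nonempty) :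
    restNorm (⊤ : SimpleGraph (Fin n)) p
      = (1 + ((Finset.Icc 1 (n - 1)).sup' hne
            (fun k : ℕ => ((n : ℝ) - (k : ℝ)) * (k : ℝ) ^ (p - 1))) / (n:ℝ) ^ p) ^ (1/p) := by
  have hFN : Nonempty (Fin n) := ⟨⟨0, by omega⟩⟩
  set g : ℕ → ℝ := fun k : ℕ => ((n : ℝ) - (k : ℝ)) * (k : ℝ) ^ (p - 1) with hg
  set M : ℝ := (Finset.Icc 1 (n - 1)).sup' hne g with hM
  have hn0 : (0:ℝ) < n := by positivity
  have hnp : (0:ℝ) < (n:ℝ) ^ p := Real.rpow_pos_of_pos hn0 p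
  have hM0 : 0 ≤ M := by
    have h1 : (1:ℕ) ∈ Finset.Icc 1 (n-1) := by simp; omega
    have h2 := Finset.le_sup' g h1
    have hg1 : g 1 = (n:ℝ) - 1 := by simp [hg]
    have h3 : (0:ℝ) ≤ (n:ℝ) - 1 := by
      have : (2:ℝ) ≤ n := by exact_mod_cast hn
      linarith
    rw [hg1] at h2
    linarith
  have key : restNorm (⊤ : SimpleGraph (Fin n)) p
      = ⨆ A : {A : Finset (Fin n) // A.Nonempty},
          (1 + ((n:ℝ) - (A.1.card:ℝ)) * (A.1.card:ℝ) ^ (p-1) / (n:ℝ) ^ p) ^ (1/p) := by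
    unfold restNorm
    congr 1
    funext A
    exact ratio_eq hn hp A.1 A.2 _ (fun v => by by_cases h : v ∈ A.1 <;> simp [h])
  rw [key]
  have hineq : ∀ A : Finset (Fin n), A.Nonempty →
      ((n:ℝ) - (A.card:ℝ)) * (A.card:ℝ) ^ (p-1) ≤ M := by
    intro A hA
    have hcd : A.card ≤ n := by simpa using Finset.card_le_univ A
    rcases eq_or_lt_of_le hcd with h | h
    · have hz : ((n:ℝ) - (A.card:ℝ)) = 0 := by rw [h]; ring
      rw [hz, zero_mul]; exact hM0
    · have hmem : A.card ∈ Finset.Icc 1 (n-1) := by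
        simp only [Finset.mem_Icc]
        exact ⟨Finset.card_pos.mpr hA, by omega⟩
      exact Finset.le_sup' g hmem
  have hNE : Nonempty {A : Finset (Fin n) // A.Nonempty} :=
    ⟨⟨Finset.univ, Finset.univ_nonempty⟩⟩
  apply le_antisymm
  · apply ciSup_le
    rintro ⟨A, hA⟩
    have hcd : A.card ≤ n := by simpa using Finset.card_le_univ A
    have hcd' : (A.card:ℝ) ≤ (n:ℝ) := by exact_mod_cast hcd
    have hnn : (0:ℝ) ≤ ((n:ℝ) - (A.card:ℝ)) * (A.card:ℝ) ^ (p-1) :=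
      mul_nonneg (by linarith) (Real.rpow_nonneg (by positivity) _)
    have hb : (0:ℝ) ≤ 1 + ((n:ℝ) - (A.card:ℝ)) * (A.card:ℝ) ^ (p-1) / (n:ℝ)^p := by
      have := div_nonneg hnn hnp.le
      linarith
    apply Real.rpow_le_rpow hb _ (by positivity)
    have := hineq A hA
    have hd : ((n:ℝ) - (A.card:ℝ)) * (A.card:ℝ) ^ (p-1) / (n:ℝ)^p ≤ M / (n:ℝ)^p :=
      div_le_div_of_nonneg_right this hnp.le
    linarith
  · obtain ⟨k0, hk0mem, hk0⟩ := Finset.exists_mem_eq_sup' hne g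
    rw [Finset.mem_Icc] at hk0mem
    obtain ⟨A, hAsub, hAcard⟩ := Finset.exists_subset_card_eq
      (s := (Finset.univ : Finset (Fin n))) (n := k0) (by simp; omega)
    have hA : A.Nonempty := Finset.card_pos.mp (by omega)
    have hbdd : BddAbove (Set.range fun A : {A : Finset (Fin n) // A.Nonempty} =>
        (1 + ((n:ℝ) - (A.1.card:ℝ)) * (A.1.card:ℝ) ^ (p-1) / (n:ℝ) ^ p) ^ (1/p)) :=
      Set.Finite.bddAbove (Set.finite_range _)
    have hle := le_ciSup hbdd (⟨A, hA⟩ : {A : Finset (Fin n) // A.Nonempty})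
    have h2 : (1 + M/(n:ℝ)^p)^(1/p)
        = (1 + ((n:ℝ) - ((⟨A,hA⟩ : {A : Finset (Fin n) // A.Nonempty}).1.card:ℝ))
            * (((⟨A,hA⟩ : {A : Finset (Fin n) // A.Nonempty}).1.card:ℝ)) ^ (p-1) / (n:ℝ)^p) ^ (1/p) := by
      simp only [hAcard]
      rw [hM, hk0, hg]
    rw [h2]
    exact hle

-- (b): if n ≤ p then (n-k) k^{p-1} ≤ (n-1)^{p-1} for 1 ≤ k ≤ n-1
lemma ineq_b {n : ℕ} (hn : 2 ≤ n) {p : ℝ} (hp : 1 < p) (hnp : (n:ℝ) ≤ p)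
    {k : ℕ} (hk1 : 1 ≤ k) (hk2 : k ≤ n - 1) :
    ((n:ℝ) - (k:ℝ)) * (k:ℝ) ^ (p-1) ≤ ((n:ℝ) - 1) ^ (p-1) := by
  have hK0 : (0:ℝ) < (k:ℝ) := by exact_mod_cast hk1
  have hKn : (k:ℝ) ≤ (n:ℝ) - 1 := by
    have : (k:ℝ) ≤ ((n-1:ℕ):ℝ) := by exact_mod_cast hk2
    rw [Nat.cast_sub (by omega)] at this
    simpa using this
  have hn1 : (1:ℝ) ≤ (n:ℝ) - 1 := by
    have : (2:ℝ) ≤ (n:ℝ) := by exact_mod_cast hn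
    linarith
  set a : ℝ := ((n:ℝ) - 1) / (k:ℝ) with ha
  have ha0 : 0 < a := by positivity
  have ha1 : 1 ≤ a := (le_div_iff₀ hK0).mpr (by linarith)
  have hlog0 : 0 ≤ Real.log a := Real.log_nonneg ha1
  -- log a ≥ 1 - 1/a
  have hlog : 1 - 1/a ≤ Real.log a := by
    have h1 := Real.log_le_sub_one_of_pos (show (0:ℝ) < 1/a by positivity)
    rw [one_div, Real.log_inv] at h1
    have : 1/a - 1 = a⁻¹ - 1 := by rw [one_div]
    linarith [h1]
  -- a^{p-1} ≥ 1 + (p-1) log a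
  have hexp : 1 + (p-1) * Real.log a ≤ a ^ (p-1) := by
    rw [Real.rpow_def_of_pos ha0]
    have h := Real.add_one_le_exp (Real.log a * (p-1))
    have hc : Real.log a * (p-1) = (p-1) * Real.log a := mul_comm _ _
    linarith [h, hc.le, hc.ge]
  have hstep : 1 + ((n:ℝ)-1) * Real.log a ≤ 1 + (p-1) * Real.log a := by
    have : (n:ℝ) - 1 ≤ p - 1 := by linarith
    nlinarith
  have hstep2 : (n:ℝ) - (k:ℝ) ≤ 1 + ((n:ℝ)-1) * Real.log a := by
    have h1a : 1/a = (k:ℝ)/((n:ℝ)-1) := by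
      rw [ha, one_div_div]
    have : ((n:ℝ)-1) * (1 - 1/a) ≤ ((n:ℝ)-1) * Real.log a :=
      mul_le_mul_of_nonneg_left hlog (by linarith)
    rw [h1a] at this
    have hrw : ((n:ℝ)-1) * (1 - (k:ℝ)/((n:ℝ)-1)) = (n:ℝ) - 1 - (k:ℝ) := by
      field_simp
    rw [hrw] at this
    linarith
  have hfinal : (n:ℝ) - (k:ℝ) ≤ a ^ (p-1) := by linarith
  calc ((n:ℝ) - (k:ℝ)) * (k:ℝ) ^ (p-1)
      ≤ a ^ (p-1) * (k:ℝ) ^ (p-1) :=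
        mul_le_mul_of_nonneg_right hfinal (Real.rpow_nonneg hK0.le _)
    _ = (a * (k:ℝ)) ^ (p-1) := (Real.mul_rpow ha0.le hK0.le).symm
    _ = ((n:ℝ) - 1) ^ (p-1) := by
        rw [ha, div_mul_cancel₀ _ (ne_of_gt hK0)]

-- (a): if (p-1)(n-1) ≤ 1 then (n-k) k^{p-1} ≤ n-1 for 1 ≤ k ≤ n-1
lemma ineq_a {n : ℕ} (hn : 2 ≤ n) {p : ℝ} (hp : 1 < p) (hq : (p-1) * ((n:ℝ)-1) ≤ 1)
    {k : ℕ} (hk1 : 1 ≤ k) (hk2 : k ≤ n - 1) :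
    ((n:ℝ) - (k:ℝ)) * (k:ℝ) ^ (p-1) ≤ (n:ℝ) - 1 := by
  have hK0 : (0:ℝ) < (k:ℝ) := by exact_mod_cast hk1
  have hK1 : (1:ℝ) ≤ (k:ℝ) := by exact_mod_cast hk1
  have hKn : (k:ℝ) ≤ (n:ℝ) - 1 := by
    have : (k:ℝ) ≤ ((n-1:ℕ):ℝ) := by exact_mod_cast hk2
    rw [Nat.cast_sub (by omega)] at this
    simpa using this
  have hn1 : (1:ℝ) ≤ (n:ℝ) - 1 := by
    have : (2:ℝ) ≤ (n:ℝ) := by exact_mod_cast hn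
    linarith
  set q : ℝ := p - 1 with hqdef
  have hq0 : 0 < q := by simp [hqdef]; linarith
  have hq1 : q ≤ 1 := by nlinarith
  -- Bernoulli: K^q ≤ 1 + q (K-1)
  have hbern : (k:ℝ) ^ q ≤ 1 + q * ((k:ℝ) - 1) := by
    have := rpow_one_add_le_one_add_mul_self
      (s := (k:ℝ) - 1) (by linarith) hq0.le hq1
    simpa using this
  have hmul : ((n:ℝ) - (k:ℝ)) * (k:ℝ) ^ q ≤ ((n:ℝ) - (k:ℝ)) * (1 + q * ((k:ℝ)-1)) :=
    mul_le_mul_of_nonneg_left hbern (by linarith)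
  have hfin : ((n:ℝ) - (k:ℝ)) * (1 + q * ((k:ℝ)-1)) ≤ (n:ℝ) - 1 := by
    have h1 : 0 ≤ (k:ℝ) - 1 := by linarith
    have h2 : q * ((n:ℝ) - (k:ℝ)) ≤ q * ((n:ℝ) - 1) :=
      mul_le_mul_of_nonneg_left (by linarith) hq0.le
    have h3 : 0 ≤ 1 - q * ((n:ℝ) - (k:ℝ)) := by linarith
    nlinarith [mul_nonneg h1 h3]
  calc ((n:ℝ) - (k:ℝ)) * (k:ℝ) ^ q ≤ ((n:ℝ) - (k:ℝ)) * (1 + q * ((k:ℝ)-1)) := hmul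
    _ ≤ (n:ℝ) - 1 := hfin

/-- the restricted-type norm of the maximal operator of the
complete graph, for 1 < p < ∞. -/
theorem stmt7 (n : ℕ) (hn : 2 ≤ n) (p : ℝ) (hp : 1 < p) (p' : ℝ)
    (hp' : 1 / p + 1 / p' = 1) :
    (restNorm (⊤ : SimpleGraph (Fin n)) p) ^ p
      = 1 + (1 / (n : ℝ) ^ p) *
          (Finset.Icc 1 (n - 1)).sup'
            (by rw [Finset.nonempty_Icc]; omega)
            (fun k : ℕ => ((n : ℝ) - (k : ℝ)) * (k : ℝ) ^ (p - 1)) ∧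
    ((n : ℝ) ≤ p' →
      restNorm (⊤ : SimpleGraph (Fin n)) p
        = (1 + ((n : ℝ) - 1) / (n : ℝ) ^ p) ^ (1 / p)) ∧
    ((n : ℝ) ≤ p →
      restNorm (⊤ : SimpleGraph (Fin n)) p
        = (1 + ((n : ℝ) - 1) ^ (p - 1) / (n : ℝ) ^ p) ^ (1 / p)) := by
  have hne : (Finset.Icc 1 (n-1)).Nonempty := by rw [Finset.nonempty_Icc]; omega
  set g : ℕ → ℝ := fun k : ℕ => ((n : ℝ) - (k : ℝ)) * (k : ℝ) ^ (p - 1) with hg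
  set M : ℝ := (Finset.Icc 1 (n - 1)).sup' hne g with hM
  have hp0 : (0:ℝ) < p := lt_trans one_pos hp
  have hn0 : (0:ℝ) < n := by positivity
  have hnR : (2:ℝ) ≤ (n:ℝ) := by exact_mod_cast hn
  have hnp : (0:ℝ) < (n:ℝ) ^ p := Real.rpow_pos_of_pos hn0 p
  have h1mem : (1:ℕ) ∈ Finset.Icc 1 (n-1) := by simp only [Finset.mem_Icc]; omega
  have hg1 : g 1 = (n:ℝ) - 1 := by simp [hg]
  have hM0 : 0 ≤ M := by
    have h2 := Finset.le_sup' g h1mem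
    rw [hg1] at h2
    have h3 : (0:ℝ) ≤ (n:ℝ) - 1 := by linarith
    rw [hM]; linarith
  have hR : restNorm (⊤ : SimpleGraph (Fin n)) p = (1 + M / (n:ℝ) ^ p) ^ (1/p) := by
    rw [restNorm_top hn hp hne]
  have hb : (0:ℝ) ≤ 1 + M / (n:ℝ)^p := by
    have := div_nonneg hM0 hnp.le
    linarith
  refine ⟨?_, ?_, ?_⟩
  · rw [hR, ← Real.rpow_mul hb, one_div_mul_cancel (ne_of_gt hp0), Real.rpow_one, hM]
    ring
  · intro hnp'
    -- derive (p-1)(n-1) ≤ 1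
    have h1p' : 1/p' = (p-1)/p := by
      field_simp at hp' ⊢
      linarith
    have hp'pos : 0 < p' := by
      have hrpos : 0 < (p-1)/p := div_pos (by linarith) hp0
      rw [← h1p'] at hrpos
      exact one_div_pos.mp hrpos
    have hinv : (p-1)/p ≤ 1/(n:ℝ) := by
      rw [← h1p']
      exact one_div_le_one_div_of_le hn0 hnp'
    have hq : (p-1) * ((n:ℝ)-1) ≤ 1 := by
      rw [div_le_div_iff₀ hp0 hn0] at hinv
      nlinarith
    have hMeq : M = (n:ℝ) - 1 := by
      apply le_antisymm
      · rw [hM]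
        apply Finset.sup'_le
        intro k hk
        rw [Finset.mem_Icc] at hk
        exact ineq_a hn hp hq hk.1 hk.2
      · have h2 := Finset.le_sup' g h1mem
        rw [hg1] at h2
        rw [hM]; exact h2
    rw [hR, hMeq]
  · intro hnlep
    have hMeq : M = ((n:ℝ) - 1) ^ (p-1) := by
      apply le_antisymm
      · rw [hM]
        apply Finset.sup'_le
        intro k hk
        rw [Finset.mem_Icc] at hk
        exact ineq_b hn hp hnlep hk.1 hk.2
      · have hmem : n - 1 ∈ Finset.Icc 1 (n-1) := by simp only [Finset.mem_Icc]; omega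
        have h2 := Finset.le_sup' g hmem
        have hgn : g (n-1) = ((n:ℝ) - 1) ^ (p-1) := by
          have hc : ((n-1:ℕ):ℝ) = (n:ℝ) - 1 := by
            rw [Nat.cast_sub (by omega)]; simp
          simp only [hg, hc]
          have : (n:ℝ) - ((n:ℝ) - 1) = 1 := by ring
          rw [this, one_mul]
        rw [hgn] at h2
        rw [hM]; exact h2
    rw [hR, hMeq]
end
end
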